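/- Let G ≤ Sym(Ω) and Fixed be a fixed-point approximator. For each i ∈ ℕ₀ let V_i be a labelled digraph stack and F_i a list of points of Ω such that the stabiliser {g ∈ G : F_i^g = F_i (pointwise)} is contained in Aut(V_i). Define f(S) to be the empty stack if no a ∈ G maps F_{|S|} pointwise to Fixed(S), and V_{|S|}^a otherwise (for any such a). Then f is well-defined and (f, f) is a refiner for G. -/

import Mathlib

/-!
Two elements `a, b ∈ G` mapping `F_{|S|}` to `Fixed(S)` differ by `b⁻¹ a`, which fixes `F_{|S|}`
pointwise and hence lies in `Aut(V_{|S|})`; so `V_{|S|}^a = V_{|S|}^b`. For `g ∈ G`, equivariance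
`Fixed(S^g) = Fixed(S)^g` means `a` works for `S` iff `g a` works for `S^g`, whence
`f(S^g) = V_{|S|}^{g a} = f(S)^g`, and both sides are empty when no `a` exists.
-/

attribute [local instance] Classical.propDecidable

/-- A (vertex- and arc-)labelled digraph on vertex set `Ω` with labels in `L`.
The arcs are the pairs on which `alabel` is not `none`. -/
structure LDigraph (Ω : Type*) (L : Type*) where
  vlabel : Ω → L
  alabel : Ω × Ω → Option L

namespace LDigraph

variable {Ω L : Type*}

/-- The action of `Sym(Ω)` on labelled digraphs: `Γ.act g` is `Γ^g`. -/
def act (Γ : LDigraph Ω L) (g : Equiv.Perm Ω) : LDigraph Ω L where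
  vlabel := fun δ => Γ.vlabel (g⁻¹ δ)
  alabel := fun p => Γ.alabel (g⁻¹ p.1, g⁻¹ p.2)

/-- The set of arcs of a labelled digraph. -/
def arcs (Γ : LDigraph Ω L) : Set (Ω × Ω) := {p | Γ.alabel p ≠ none}

/-- The set of permutations inducing an isomorphism from `Γ` to `Δ`. -/
def Iso (Γ Δ : LDigraph Ω L) : Set (Equiv.Perm Ω) := {g | Γ.act g = Δ}

end LDigraph

/-- A labelled digraph stack on `Ω`: a finite list of labelled digraphs on `Ω`. -/
abbrev Stack (Ω L : Type*) := List (LDigraph Ω L)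

namespace Stack

variable {Ω L : Type*}

/-- Entrywise action of `Sym(Ω)` on labelled digraph stacks. -/
def act (S : Stack Ω L) (g : Equiv.Perm Ω) : Stack Ω L := S.map (fun Γ => Γ.act g)

/-- The set of permutations inducing an isomorphism from the stack `S` to the stack `T`. -/
def Iso (S T : Stack Ω L) : Set (Equiv.Perm Ω) := {g | Stack.act S g = T}

/-- The squashed labelled digraph of a stack: arcs are the union of the arcs;
a vertex label is the list of the vertex labels; an arc label is the list of
the arc labels, with `none` (the symbol `#`) for missing arcs. -/
noncomputable def squash (S : Stack Ω L) : LDigraph Ω (List (Option L)) where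
  vlabel := fun δ => S.map (fun Γ => some (Γ.vlabel δ))
  alabel := fun p =>
    if ∀ Γ ∈ S, Γ.alabel p = none then none
    else some (S.map (fun Γ => Γ.alabel p))

end Stack

/-- `(fL, fR)` is a refiner for `U ⊆ Sym(Ω)`:
for all isomorphic stacks `S`, `T`, `U ∩ Iso(S,T) ⊆ U ∩ Iso(fL S, fR T)`. -/
def IsRefiner {Ω L : Type*} (U : Set (Equiv.Perm Ω))
    (fL fR : Stack Ω L → Stack Ω L) : Prop :=
  ∀ S T : Stack Ω L, (Stack.Iso S T).Nonempty →
    U ∩ Stack.Iso S T ⊆ U ∩ Stack.Iso (fL S) (fR T)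

/-- The refining function of Lemma `lem-fixed-stack`: `f(S)` is the empty stack if
no `a ∈ G` maps `F_{|S|}` pointwise to `Fixed(S)`, and `(V_{|S|})^a` for such
an `a` otherwise. -/
noncomputable def fixedStackRefine {Ω L : Type*} (G : Subgroup (Equiv.Perm Ω))
    (Fixed : Stack Ω L → List Ω) (V : ℕ → Stack Ω L) (F : ℕ → List Ω)
    (S : Stack Ω L) : Stack Ω L :=
  if hex : ∃ a : Equiv.Perm Ω, a ∈ G ∧ (F S.length).map ⇑a = Fixed S
  then Stack.act (V S.length) hex.choose
  else ([] : Stack Ω L)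

namespace LDigraph

variable {Ω L : Type*}

theorem act_act (Γ : LDigraph Ω L) (g h : Equiv.Perm Ω) :
    (Γ.act g).act h = Γ.act (h * g) := by
  simp only [act, mul_inv_rev, Equiv.Perm.mul_apply]

end LDigraph

namespace Stack

variable {Ω L : Type*}

theorem act_act (S : Stack Ω L) (g h : Equiv.Perm Ω) :
    (S.act g).act h = S.act (h * g) := by
  simp [act, Function.comp_def, LDigraph.act_act]

@[simp]
theorem act_nil (g : Equiv.Perm Ω) : Stack.act ([] : Stack Ω L) g = [] := rfl

@[simp]
theorem length_act (S : Stack Ω L) (g : Equiv.Perm Ω) : (S.act g).length = S.length :=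
  List.length_map _

end Stack

theorem List.map_perm_mul {Ω : Type*} (l : List Ω) (g h : Equiv.Perm Ω) :
    l.map ⇑(g * h) = (l.map h).map g := by
  rw [Equiv.Perm.coe_mul, List.map_map]

theorem List.map_perm_inv_mul_self {Ω : Type*} (l : List Ω) (g : Equiv.Perm Ω) :
    (l.map g).map ⇑g⁻¹ = l := by
  rw [← List.map_perm_mul, inv_mul_cancel, Equiv.Perm.coe_one, List.map_id]

section FixedStackRefine

variable {Ω L : Type*} {G : Subgroup (Equiv.Perm Ω)}

theorem Stack.act_eq_act_of_map_eq {V : Stack Ω L} {F : List Ω}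
    (hVF : ∀ g ∈ G, F.map ⇑g = F → g ∈ Stack.Iso V V) {a b : Equiv.Perm Ω}
    (ha : a ∈ G) (hb : b ∈ G) (hab : F.map ⇑a = F.map ⇑b) : V.act a = V.act b := by
  have hfix : F.map ⇑(b⁻¹ * a) = F := by
    rw [List.map_perm_mul, hab, List.map_perm_inv_mul_self]
  have hstab : V.act (b⁻¹ * a) = V := hVF _ (mul_mem (inv_mem hb) ha) hfix
  rw [← mul_inv_cancel_left b a, ← Stack.act_act, hstab]

theorem exists_mem_map_eq_map_iff {l m : List Ω} {g : Equiv.Perm Ω} (hg : g ∈ G) :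
    (∃ a ∈ G, l.map ⇑a = m.map ⇑g) ↔ ∃ a ∈ G, l.map ⇑a = m := by
  constructor
  · rintro ⟨a, ha, hla⟩
    refine ⟨g⁻¹ * a, mul_mem (inv_mem hg) ha, ?_⟩
    rw [List.map_perm_mul, hla, List.map_perm_inv_mul_self]
  · rintro ⟨a, ha, hla⟩
    exact ⟨g * a, mul_mem hg ha, by rw [List.map_perm_mul, hla]⟩

variable {Fixed : Stack Ω L → List Ω} {V : ℕ → Stack Ω L} {F : ℕ → List Ω}

theorem fixedStackRefine_eq_act
    (hVF : ∀ i : ℕ, ∀ g ∈ G, (F i).map ⇑g = F i → g ∈ Stack.Iso (V i) (V i))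
    {S : Stack Ω L} {a : Equiv.Perm Ω} (ha : a ∈ G) (hFa : (F S.length).map ⇑a = Fixed S) :
    fixedStackRefine G Fixed V F S = (V S.length).act a := by
  have hex : ∃ a ∈ G, (F S.length).map ⇑a = Fixed S := ⟨a, ha, hFa⟩
  rw [fixedStackRefine, dif_pos hex]
  exact Stack.act_eq_act_of_map_eq (hVF _) hex.choose_spec.1 ha
    (hex.choose_spec.2.trans hFa.symm)

theorem fixedStackRefine_eq_nil {S : Stack Ω L}
    (hS : ¬∃ a ∈ G, (F S.length).map ⇑a = Fixed S) :
    fixedStackRefine G Fixed V F S = [] :=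
  dif_neg hS

theorem fixedStackRefine_act
    (hFix : ∀ (S : Stack Ω L) (g : Equiv.Perm Ω), (Fixed S).map ⇑g = Fixed (S.act g))
    (hVF : ∀ i : ℕ, ∀ g ∈ G, (F i).map ⇑g = F i → g ∈ Stack.Iso (V i) (V i))
    (S : Stack Ω L) {g : Equiv.Perm Ω} (hg : g ∈ G) :
    fixedStackRefine G Fixed V F (S.act g) = (fixedStackRefine G Fixed V F S).act g := by
  by_cases hS : ∃ a ∈ G, (F S.length).map ⇑a = Fixed S
  · obtain ⟨a, ha, hFa⟩ := hS
    have hFga : (F (S.act g).length).map ⇑(g * a) = Fixed (S.act g) := by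
      rw [Stack.length_act, List.map_perm_mul, hFa, hFix]
    rw [fixedStackRefine_eq_act hVF (mul_mem hg ha) hFga,
      fixedStackRefine_eq_act hVF ha hFa, Stack.length_act, Stack.act_act]
  · have hSg : ¬∃ a ∈ G, (F (S.act g).length).map ⇑a = Fixed (S.act g) := by
      rwa [Stack.length_act, ← hFix, exists_mem_map_eq_map_iff hg]
    rw [fixedStackRefine_eq_nil hSg, fixedStackRefine_eq_nil hS, Stack.act_nil]

end FixedStackRefine

theorem stmt17_general {Ω L : Type*} (G : Subgroup (Equiv.Perm Ω))
    (Fixed : Stack Ω L → List Ω)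
    (hFix2 : ∀ (S : Stack Ω L) (g : Equiv.Perm Ω),
      (Fixed S).map ⇑g = Fixed (Stack.act S g))
    (V : ℕ → Stack Ω L) (F : ℕ → List Ω)
    (hVF : ∀ i : ℕ, ∀ g ∈ G, (F i).map ⇑g = F i → g ∈ Stack.Iso (V i) (V i)) :
    (∀ S : Stack Ω L, ∀ a b : Equiv.Perm Ω, a ∈ G → b ∈ G →
      (F S.length).map ⇑a = Fixed S → (F S.length).map ⇑b = Fixed S →
      Stack.act (V S.length) a = Stack.act (V S.length) b) ∧
    IsRefiner (G : Set (Equiv.Perm Ω))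
      (fixedStackRefine G Fixed V F) (fixedStackRefine G Fixed V F) := by
  refine ⟨fun S a b ha hb hFa hFb =>
    Stack.act_eq_act_of_map_eq (hVF _) ha hb (hFa.trans hFb.symm), ?_⟩
  rintro S _ - g ⟨hg, rfl⟩
  exact ⟨hg, (fixedStackRefine_act hFix2 hVF S hg).symm⟩

/-- Let `G ≤ Sym(Ω)` and let `Fixed` be a fixed-point approximator.  Given, for each
`i ∈ ℕ₀`, a labelled digraph stack `V i` and a list `F i` of points such that the
pointwise stabiliser of `F i` in `G` is contained in `Aut(V i)`, the function `f`
defined above is well-defined (independent of the choice of `a`), and `(f, f)` is a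
refiner for `G`. -/
theorem stmt17 {Ω L : Type*} [Finite Ω] (G : Subgroup (Equiv.Perm Ω))
    (Fixed : Stack Ω L → List Ω)
    (hFix1 : ∀ S : Stack Ω L, ∀ ω ∈ Fixed S, ∀ a ∈ Stack.Iso S S, a ω = ω)
    (hFix2 : ∀ (S : Stack Ω L) (g : Equiv.Perm Ω),
      (Fixed S).map ⇑g = Fixed (Stack.act S g))
    (V : ℕ → Stack Ω L) (F : ℕ → List Ω)
    (hVF : ∀ i : ℕ, ∀ g ∈ G, (F i).map ⇑g = F i → g ∈ Stack.Iso (V i) (V i)) :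
    (∀ S : Stack Ω L, ∀ a b : Equiv.Perm Ω, a ∈ G → b ∈ G →
      (F S.length).map ⇑a = Fixed S → (F S.length).map ⇑b = Fixed S →
      Stack.act (V S.length) a = Stack.act (V S.length) b) ∧
    IsRefiner (G : Set (Equiv.Perm Ω))
      (fixedStackRefine G Fixed V F) (fixedStackRefine G Fixed V F) :=
  stmt17_general G Fixed hFix2 V F hVF
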